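/- arXiv:2307.01632 — 7 statements merged into one kernel-verified Lean document; each statement's English description precedes it below -/
import Mathlib

section
/- In the majority-imitation model, if the selected agent k changes opinion at time t (which happens only when strictly more of its neighbors hold the new opinion than its current opinion), then Z_{t+1} < Z_t; otherwise Z_{t+1} = Z_t. In particular (Z_t) is nonincreasing in t. -/
/-!
Split off the updated vertex `k`. The pairs not involving `k` are unaffected by the update, and
each ordered pair `(k, j)` or `(j, k)` with `j ≠ k` costs `1` unless `j` is a neighbour sharing
`k`'s opinion. Hence `Z + 2 · #{neighbours agreeing with k}` does not change when only `k` moves,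
so switching `k` to an opinion held by strictly more neighbours strictly decreases `Z`.
-/

open Finset

/-- `Z(x) = Σ_{i≠j} max(1{x i ≠ x j}, 1{(i,j) ∉ E})`, summed over ordered pairs. -/
def Zval {n : ℕ} (G : SimpleGraph (Fin n)) [DecidableRel G.Adj] (x : Fin n → ℤ) : ℕ :=
  ∑ i : Fin n, ∑ j : Fin n,
    max (if x i ≠ x j then 1 else 0) (if i ≠ j ∧ ¬ G.Adj i j then 1 else 0)

section Discord

variable {V α : Type*} [DecidableEq V] [DecidableEq α] (G : SimpleGraph V) [DecidableRel G.Adj]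

def discord (x : V → α) (i j : V) : ℕ :=
  max (if x i ≠ x j then 1 else 0) (if i ≠ j ∧ ¬ G.Adj i j then 1 else 0)

variable {G}

theorem discord_comm (x : V → α) (i j : V) : discord G x i j = discord G x j i := by
  simp only [discord, ne_comm, G.adj_comm]

@[simp]
theorem discord_self (x : V → α) (i : V) : discord G x i i = 0 := by
  simp [discord]

theorem discord_add_agree {x : V → α} {i j : V} (hij : i ≠ j) :
    discord G x i j + (if G.Adj i j ∧ x j = x i then 1 else 0) = 1 := by
  grind [discord]

variable [Fintype V]

theorem card_agree_eq_sum (x : V → α) (k : V) :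
    #{m ∈ G.neighborFinset k | x m = x k} =
      ∑ j ∈ univ.erase k, if G.Adj k j ∧ x j = x k then 1 else 0 := by
  rw [card_filter, G.neighborFinset_eq_filter, sum_filter,
    ← add_sum_erase _ _ (mem_univ k)]
  simp only [G.irrefl, ite_false, zero_add, ite_and]

theorem sum_discord_add_two_mul_card_agree (x : V → α) (k : V) :
    ∑ i, ∑ j, discord G x i j + 2 * #{m ∈ G.neighborFinset k | x m = x k} =
      2 * #(univ.erase k) + ∑ i ∈ univ.erase k, ∑ j ∈ univ.erase k, discord G x i j := by
  have hrow : ∑ j, discord G x k j = ∑ j ∈ univ.erase k, discord G x k j := by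
    rw [← add_sum_erase _ _ (mem_univ k), discord_self, zero_add]
  have hsplit : ∑ i, ∑ j, discord G x i j =
      2 * ∑ j ∈ univ.erase k, discord G x k j +
        ∑ i ∈ univ.erase k, ∑ j ∈ univ.erase k, discord G x i j := by
    rw [← add_sum_erase _ _ (mem_univ k), hrow]
    rw [sum_congr rfl fun i _ => (add_sum_erase _ (discord G x i) (mem_univ k)).symm,
      sum_add_distrib, sum_congr rfl fun i _ => discord_comm x i k]
    ring
  have hpair : ∑ j ∈ univ.erase k, discord G x k j + #{m ∈ G.neighborFinset k | x m = x k} =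
      #(univ.erase k) := by
    rw [card_agree_eq_sum, ← sum_add_distrib,
      sum_congr rfl fun j hj => discord_add_agree (ne_of_mem_erase hj).symm, card_eq_sum_ones]
  omega

end Discord

theorem Zval_eq_sum_discord {n : ℕ} (G : SimpleGraph (Fin n)) [DecidableRel G.Adj]
    (x : Fin n → ℤ) : Zval G x = ∑ i, ∑ j, discord G x i j :=
  rfl

theorem Zval_add_two_mul_card_agree_eq {n : ℕ} {G : SimpleGraph (Fin n)} [DecidableRel G.Adj]
    {x y : Fin n → ℤ} {k : Fin n} (hyx : ∀ i ≠ k, y i = x i) :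
    Zval G y + 2 * #{m ∈ G.neighborFinset k | y m = y k} =
      Zval G x + 2 * #{m ∈ G.neighborFinset k | x m = x k} := by
  have hoff : ∑ i ∈ univ.erase k, ∑ j ∈ univ.erase k, discord G y i j =
      ∑ i ∈ univ.erase k, ∑ j ∈ univ.erase k, discord G x i j :=
    sum_congr rfl fun i hi => sum_congr rfl fun j hj => by
      rw [discord, discord, hyx i (ne_of_mem_erase hi), hyx j (ne_of_mem_erase hj)]
  rw [Zval_eq_sum_discord, Zval_eq_sum_discord, sum_discord_add_two_mul_card_agree,
    sum_discord_add_two_mul_card_agree, hoff]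

theorem Zval_majority_update {n : ℕ} {G : SimpleGraph (Fin n)} [DecidableRel G.Adj]
    {x y : Fin n → ℤ} {k j : Fin n}
    (hy : ∀ i, y i =
      if i = k ∧ #{m ∈ G.neighborFinset k | x m = x j} > #{m ∈ G.neighborFinset k | x m = x k}
        then x j else x i) :
    (y k ≠ x k → Zval G y < Zval G x) ∧ (y k = x k → Zval G y = Zval G x) := by
  have hoff : ∀ i ≠ k, y i = x i := fun i hi => by rw [hy i, if_neg fun h => hi h.1]
  refine ⟨fun hne => ?_, fun heq => ?_⟩
  · have hmaj :
        #{m ∈ G.neighborFinset k | x m = x j} > #{m ∈ G.neighborFinset k | x m = x k} := by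
      by_contra hmin
      exact hne (by rw [hy k, if_neg fun h => hmin h.2])
    have hyk : y k = x j := by rw [hy k, if_pos ⟨rfl, hmaj⟩]
    have hagree :
        #{m ∈ G.neighborFinset k | y m = y k} = #{m ∈ G.neighborFinset k | x m = x j} :=
      congrArg card <| filter_congr fun m hm => by
        rw [hoff m (G.ne_of_adj ((G.mem_neighborFinset k m).1 hm)).symm, hyk]
    have := Zval_add_two_mul_card_agree_eq (G := G) hoff
    omega
  · have : y = x := funext fun i => if hi : i = k then hi ▸ heq else hoff i hi
    rw [this]

theorem stmt1_general {n : ℕ} (G : SimpleGraph (Fin n)) [DecidableRel G.Adj]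
    (X : ℕ → Fin n → ℤ) (ksel jsel : ℕ → Fin n)
    (hupd : ∀ t i, X (t + 1) i =
      if i = ksel t ∧
          ((G.neighborFinset (ksel t)).filter (fun m => X t m = X t (jsel t))).card >
            ((G.neighborFinset (ksel t)).filter (fun m => X t m = X t (ksel t))).card
        then X t (jsel t) else X t i) :
    (∀ t, (X (t + 1) (ksel t) ≠ X t (ksel t) → Zval G (X (t + 1)) < Zval G (X t)) ∧
          (X (t + 1) (ksel t) = X t (ksel t) → Zval G (X (t + 1)) = Zval G (X t))) ∧
    Antitone (fun t => Zval G (X t)) := by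
  have hstep := fun t => Zval_majority_update (hupd t)
  refine ⟨hstep, antitone_nat_of_succ_le fun t => ?_⟩
  by_cases h : X (t + 1) (ksel t) = X t (ksel t)
  · exact ((hstep t).2 h).le
  · exact ((hstep t).1 h).le

theorem stmt1 {n : ℕ} (G : SimpleGraph (Fin n)) [DecidableRel G.Adj] (hconn : G.Connected)
    (X : ℕ → Fin n → ℤ) (ksel jsel : ℕ → Fin n)
    (hx0 : ∀ i, X 0 i = 1 ∨ X 0 i = -1)
    (hadj : ∀ t, G.Adj (ksel t) (jsel t))
    (hupd : ∀ t i, X (t + 1) i =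
      if i = ksel t ∧
          ((G.neighborFinset (ksel t)).filter (fun m => X t m = X t (jsel t))).card >
            ((G.neighborFinset (ksel t)).filter (fun m => X t m = X t (ksel t))).card
        then X t (jsel t) else X t i) :
    (∀ t, (X (t + 1) (ksel t) ≠ X t (ksel t) → Zval G (X (t + 1)) < Zval G (X t)) ∧
          (X (t + 1) (ksel t) = X t (ksel t) → Zval G (X (t + 1)) = Zval G (X t))) ∧
    Antitone (fun t => Zval G (X t)) :=
  stmt1_general G X ksel jsel hupd
end

section
/- Let G be a cycle or path on n ≥ 4 vertices. If four consecutive vertices a,b,c,d (a path a–b–c–d in G) initially have opinions 1, 1, −1, −1, then under any sequence of majority-imitation updates, the opinions of a, b, c, d never change. In particular consensus is never reached. -/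
/-!
A vertex of degree at most two that agrees with one of its neighbours can never see strictly
more neighbours holding another opinion, so it never updates. Two adjacent vertices with the
same opinion therefore keep it forever, and on a cycle or path every degree is at most two.
-/

open Finset SimpleGraph

lemma Finset.card_filter_eq_le_of_card_le_two_mul {α β : Type*} [DecidableEq α] [DecidableEq β]
    (s : Finset α) (Y : α → β)
    (p q : β) (hs : #s ≤ 2 * #(s.filter (Y · = q))) :
    #(s.filter (Y · = p)) ≤ #(s.filter (Y · = q)) := by
  by_cases hpq : p = q
  · rw [hpq]
  have hdisj : Disjoint (s.filter (Y · = p)) (s.filter (Y · = q)) :=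
    disjoint_filter_filter' _ _ fun _ hp hq x hx => hpq ((hp x hx).symm.trans (hq x hx))
  have := card_le_card (union_subset (filter_subset (Y · = p) s) (filter_subset (Y · = q) s))
  rw [card_union_of_disjoint hdisj] at this
  omega

lemma SimpleGraph.cycleGraph_degree_le_two {n : ℕ} (v : Fin n) :
    (cycleGraph n).degree v ≤ 2 := by
  match n with
  | 0 => exact v.elim0
  | 1 => simp [cycleGraph_one_eq_bot]
  | _ + 2 => exact cycleGraph_degree_two_le.trans_le card_le_two

section MajorityImitation

variable {V : Type*} [Fintype V] [DecidableEq V] {G : SimpleGraph V} [DecidableRel G.Adj]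
  {X : ℕ → V → ℤ} {ksel jsel : ℕ → V}

lemma majority_update_eq_self
    (hupd : ∀ t i, X (t + 1) i =
      if i = ksel t ∧
          ((G.neighborFinset (ksel t)).filter (fun m => X t m = X t (jsel t))).card >
            ((G.neighborFinset (ksel t)).filter (fun m => X t m = X t (ksel t))).card
        then X t (jsel t) else X t i)
    {t : ℕ} {i m : V} (hdeg : G.degree i ≤ 2) (hm : G.Adj i m) (hagree : X t m = X t i) :
    X (t + 1) i = X t i := by
  rw [hupd, if_neg]
  rintro ⟨rfl, hflip⟩
  have hagree_pos : 0 < #((G.neighborFinset (ksel t)).filter (X t · = X t (ksel t))) :=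
    card_pos.mpr ⟨m, mem_filter.mpr ⟨(mem_neighborFinset _ _ _).mpr hm, hagree⟩⟩
  refine hflip.not_ge (card_filter_eq_le_of_card_le_two_mul _ _ _ _ ?_)
  rw [card_neighborFinset_eq_degree]
  omega

lemma majority_adj_agree_stable
    (hupd : ∀ t i, X (t + 1) i =
      if i = ksel t ∧
          ((G.neighborFinset (ksel t)).filter (fun m => X t m = X t (jsel t))).card >
            ((G.neighborFinset (ksel t)).filter (fun m => X t m = X t (ksel t))).card
        then X t (jsel t) else X t i)
    {u v : V} (hu : G.degree u ≤ 2) (hv : G.degree v ≤ 2) (huv : G.Adj u v)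
    (hagree : X 0 u = X 0 v) (t : ℕ) : X t u = X 0 u ∧ X t v = X 0 u := by
  induction t with
  | zero => exact ⟨rfl, hagree.symm⟩
  | succ t ih =>
    obtain ⟨htu, htv⟩ := ih
    rw [majority_update_eq_self hupd hu huv (htv.trans htu.symm),
      majority_update_eq_self hupd hv huv.symm (htu.trans htv.symm)]
    exact ⟨htu, htv⟩

end MajorityImitation

theorem stmt5_general {n : ℕ} (G : SimpleGraph (Fin n)) [DecidableRel G.Adj]
    (hG : G = SimpleGraph.cycleGraph n ∨ G = SimpleGraph.pathGraph n)
    (a b c d : Fin n)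
    (hab : G.Adj a b) (hcd : G.Adj c d)
    (X : ℕ → Fin n → ℤ) (ksel jsel : ℕ → Fin n)
    (hupd : ∀ t i, X (t + 1) i =
      if i = ksel t ∧
          ((G.neighborFinset (ksel t)).filter (fun m => X t m = X t (jsel t))).card >
            ((G.neighborFinset (ksel t)).filter (fun m => X t m = X t (ksel t))).card
        then X t (jsel t) else X t i)
    (ha : X 0 a = 1) (hb : X 0 b = 1) (hc : X 0 c = -1) (hd : X 0 d = -1) :
    (∀ t, X t a = 1 ∧ X t b = 1 ∧ X t c = -1 ∧ X t d = -1) ∧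
    ¬ ∃ t, ∀ i j : Fin n, X t i = X t j := by
  have hle : G ≤ cycleGraph n := hG.elim le_of_eq fun h => h ▸ pathGraph_le_cycleGraph
  have hdeg (v : Fin n) : G.degree v ≤ 2 :=
    (degree_le_of_le hle).trans (cycleGraph_degree_le_two v)
  have hfrozen (t : ℕ) : X t a = 1 ∧ X t b = 1 ∧ X t c = -1 ∧ X t d = -1 := by
    obtain ⟨hta, htb⟩ :=
      majority_adj_agree_stable hupd (hdeg a) (hdeg b) hab (ha.trans hb.symm) t
    obtain ⟨htc, htd⟩ :=
      majority_adj_agree_stable hupd (hdeg c) (hdeg d) hcd (hc.trans hd.symm) t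
    exact ⟨hta.trans ha, htb.trans ha, htc.trans hc, htd.trans hc⟩
  refine ⟨hfrozen, fun ⟨t, hcons⟩ => ?_⟩
  have := hcons a c
  rw [(hfrozen t).1, (hfrozen t).2.2.1] at this
  norm_num at this

theorem stmt5 {n : ℕ} (hn : 4 ≤ n) (G : SimpleGraph (Fin n)) [DecidableRel G.Adj]
    (hG : G = SimpleGraph.cycleGraph n ∨ G = SimpleGraph.pathGraph n)
    (a b c d : Fin n)
    (hab : G.Adj a b) (hbc : G.Adj b c) (hcd : G.Adj c d)
    (hac : a ≠ c) (had : a ≠ d) (hbd : b ≠ d)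
    (X : ℕ → Fin n → ℤ) (ksel jsel : ℕ → Fin n)
    (hadj : ∀ t, G.Adj (ksel t) (jsel t))
    (hupd : ∀ t i, X (t + 1) i =
      if i = ksel t ∧
          ((G.neighborFinset (ksel t)).filter (fun m => X t m = X t (jsel t))).card >
            ((G.neighborFinset (ksel t)).filter (fun m => X t m = X t (ksel t))).card
        then X t (jsel t) else X t i)
    (ha : X 0 a = 1) (hb : X 0 b = 1) (hc : X 0 c = -1) (hd : X 0 d = -1) :
    (∀ t, X t a = 1 ∧ X t b = 1 ∧ X t c = -1 ∧ X t d = -1) ∧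
    ¬ ∃ t, ∀ i j : Fin n, X t i = X t j :=
  stmt5_general G hG a b c d hab hcd X ksel jsel hupd ha hb hc hd
end

section
/- Let G = ([n],E) be any connected graph containing a path a–b–c–d where a, b, c, d all have degree at most 2 in G and initial opinions 1, 1, −1, −1 respectively. Then under any sequence of majority-imitation updates, vertices a, b, c, d never change opinion, so consensus is never achieved. -/
/-!
A vertex of degree at most two that agrees with one of its neighbours sees at least as many
neighbours holding its own opinion as holding any other one, so the strict-majority rule never
lets it switch. Along the path `a - b - c - d` the edges `ab` and `cd` are such agreeing pairs,
hence `a, b` keep opinion `1` and `c, d` keep `-1` forever, and `b`, `c` never agree.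
-/

open Finset

theorem Finset.card_filter_eq_le_card_filter_eq_of_card_le_two {ι α : Type*} [DecidableEq α]
    {s : Finset ι} (hs : #s ≤ 2) {w : ι} (hw : w ∈ s) (f : ι → α) (y : α) :
    #(s.filter (f · = y)) ≤ #(s.filter (f · = f w)) := by
  by_cases hy : y = f w
  · rw [hy]
  have hdisj : Disjoint (s.filter (f · = y)) (s.filter (f · = f w)) :=
    disjoint_filter.mpr fun _ _ h h' => hy (h ▸ h')
  have hsum : #(s.filter (f · = y)) + #(s.filter (f · = f w)) ≤ 2 := by
    classical
    rw [← card_union_of_disjoint hdisj]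
    exact (card_le_card (union_subset (filter_subset _ _) (filter_subset _ _))).trans hs
  have hpos : 0 < #(s.filter (f · = f w)) := card_pos.mpr ⟨w, mem_filter.mpr ⟨hw, rfl⟩⟩
  omega

namespace SimpleGraph

variable {V α : Type*} [Fintype V] [DecidableEq V] [DecidableEq α]
  (G : SimpleGraph V) [DecidableRel G.Adj]

def majorityUpdate (Y : V → α) (k j : V) : V → α := fun i =>
  if i = k ∧ #((G.neighborFinset k).filter (fun m => Y m = Y j)) >
      #((G.neighborFinset k).filter (fun m => Y m = Y k))
    then Y j else Y i

variable {G}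

theorem majorityUpdate_apply_eq_of_adj_of_degree_le_two {Y : V → α} {v w : V}
    (hvw : G.Adj v w) (hdeg : G.degree v ≤ 2) (hw : Y w = Y v) (k j : V) :
    G.majorityUpdate Y k j v = Y v := by
  rw [majorityUpdate, if_neg]
  rintro ⟨rfl, hgt⟩
  have hle := Finset.card_filter_eq_le_card_filter_eq_of_card_le_two
    ((G.card_neighborFinset_eq_degree v).trans_le hdeg) ((G.mem_neighborFinset v w).mpr hvw) Y (Y j)
  rw [hw] at hle
  exact hle.not_gt hgt

theorem majorityUpdate_iterate_eq_of_adj_of_degree_le_two {X : ℕ → V → α} {ksel jsel : ℕ → V}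
    (hX : ∀ t, X (t + 1) = G.majorityUpdate (X t) (ksel t) (jsel t)) {v w : V}
    (hvw : G.Adj v w) (hdegv : G.degree v ≤ 2) (hdegw : G.degree w ≤ 2) (h0 : X 0 w = X 0 v)
    (t : ℕ) : X t v = X 0 v ∧ X t w = X 0 w := by
  induction t with
  | zero => exact ⟨rfl, rfl⟩
  | succ t ih =>
    have hagree : X t w = X t v := by rw [ih.1, ih.2, h0]
    rw [hX, majorityUpdate_apply_eq_of_adj_of_degree_le_two hvw hdegv hagree,
      majorityUpdate_apply_eq_of_adj_of_degree_le_two hvw.symm hdegw hagree.symm]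
    exact ih

end SimpleGraph

theorem stmt7_general {n : ℕ} (G : SimpleGraph (Fin n)) [DecidableRel G.Adj]
    (a b c d : Fin n)
    (hab : G.Adj a b) (hcd : G.Adj c d)
    (hdega : G.degree a ≤ 2) (hdegb : G.degree b ≤ 2)
    (hdegc : G.degree c ≤ 2) (hdegd : G.degree d ≤ 2)
    (X : ℕ → Fin n → ℤ) (ksel jsel : ℕ → Fin n)
    (hupd : ∀ t i, X (t + 1) i =
      if i = ksel t ∧
          ((G.neighborFinset (ksel t)).filter (fun m => X t m = X t (jsel t))).card >
            ((G.neighborFinset (ksel t)).filter (fun m => X t m = X t (ksel t))).card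
        then X t (jsel t) else X t i)
    (ha : X 0 a = 1) (hb : X 0 b = 1) (hc : X 0 c = -1) (hd : X 0 d = -1) :
    (∀ t, X t a = 1 ∧ X t b = 1 ∧ X t c = -1 ∧ X t d = -1) ∧
    ¬ ∃ t, ∀ i j : Fin n, X t i = X t j := by
  have hX : ∀ t, X (t + 1) = G.majorityUpdate (X t) (ksel t) (jsel t) :=
    fun t => funext (hupd t)
  have frozen : ∀ t, X t a = 1 ∧ X t b = 1 ∧ X t c = -1 ∧ X t d = -1 := by
    intro t
    obtain ⟨hat, hbt⟩ := G.majorityUpdate_iterate_eq_of_adj_of_degree_le_two hX hab hdega hdegb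
      (hb.trans ha.symm) t
    obtain ⟨hct, hdt⟩ := G.majorityUpdate_iterate_eq_of_adj_of_degree_le_two hX hcd hdegc hdegd
      (hd.trans hc.symm) t
    exact ⟨hat.trans ha, hbt.trans hb, hct.trans hc, hdt.trans hd⟩
  refine ⟨frozen, fun ⟨t, hcons⟩ => ?_⟩
  have hbc := hcons b c
  rw [(frozen t).2.1, (frozen t).2.2.1] at hbc
  exact absurd hbc (by decide)

theorem stmt7 {n : ℕ} (G : SimpleGraph (Fin n)) [DecidableRel G.Adj] (hconn : G.Connected)
    (a b c d : Fin n)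
    (hab : G.Adj a b) (hbc : G.Adj b c) (hcd : G.Adj c d)
    (hac : a ≠ c) (had : a ≠ d) (hbd : b ≠ d)
    (hdega : G.degree a ≤ 2) (hdegb : G.degree b ≤ 2)
    (hdegc : G.degree c ≤ 2) (hdegd : G.degree d ≤ 2)
    (X : ℕ → Fin n → ℤ) (ksel jsel : ℕ → Fin n)
    (hadj : ∀ t, G.Adj (ksel t) (jsel t))
    (hupd : ∀ t i, X (t + 1) i =
      if i = ksel t ∧
          ((G.neighborFinset (ksel t)).filter (fun m => X t m = X t (jsel t))).card >
            ((G.neighborFinset (ksel t)).filter (fun m => X t m = X t (ksel t))).card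
        then X t (jsel t) else X t i)
    (ha : X 0 a = 1) (hb : X 0 b = 1) (hc : X 0 c = -1) (hd : X 0 d = -1) :
    (∀ t, X t a = 1 ∧ X t b = 1 ∧ X t c = -1 ∧ X t d = -1) ∧
    ¬ ∃ t, ∀ i j : Fin n, X t i = X t j :=
  stmt7_general G a b c d hab hcd hdega hdegb hdegc hdegd X ksel jsel hupd ha hb hc hd
end

section
/- Let G = ([n],E) be connected and suppose initial opinions x_i(0) are i.i.d. with P(x_i(0)=1)=p, and the dynamics are majority-imitation with the selected vertex and neighbor chosen so that every (vertex, neighbor) pair is selected infinitely often almost surely. Then the probability of eventual consensus satisfies P(consensus) ≥ 1 − 2p(1−p)|E|. -/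
/-!
If the initial opinions already agree along every edge, they agree everywhere (the graph is
connected), and a configuration in consensus is fixed by any imitation dynamics, since every
update copies an existing opinion. Hence non-consensus forces an initial disagreement on some
edge, and a union bound over the edges, each disagreeing with probability `2p(1-p)`, gives the
estimate.
-/

open Finset MeasureTheory ProbabilityTheory

theorem SimpleGraph.Preconnected.eq_of_forall_adj_eq {V α : Type*} {G : SimpleGraph V}
    (hG : G.Preconnected) {f : V → α} (hf : ∀ i j, G.Adj i j → f i = f j) (i j : V) :
    f i = f j := by
  obtain ⟨w⟩ := hG i j
  induction w with
  | nil => rfl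
  | cons h _ ih => exact (hf _ _ h).trans ih

theorem eq_of_imitation {V α : Type*} (x : ℕ → V → α) (himit : ∀ t i, ∃ j, x (t + 1) i = x t j)
    (h0 : ∀ i j, x 0 i = x 0 j) (t : ℕ) (i j : V) : x t i = x t j := by
  induction t generalizing i j with
  | zero => exact h0 i j
  | succ t ih =>
    obtain ⟨i', hi'⟩ := himit t i
    obtain ⟨j', hj'⟩ := himit t j
    rw [hi', hj']
    exact ih i' j'

section Probability

variable {Ω α : Type*} [MeasurableSpace Ω] {μ : Measure Ω}

theorem measure_eq_ofReal_one_sub_of_two_valued [IsProbabilityMeasure μ] [MeasurableSpace α]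
    [MeasurableSingletonClass α] {Y : Ω → α} {a b : α}
    (hab : a ≠ b) (hY : Measurable Y) (hYab : ∀ ω, Y ω = a ∨ Y ω = b) {p : ℝ} (hp0 : 0 ≤ p)
    (hYa : μ {ω | Y ω = a} = ENNReal.ofReal p) :
    μ {ω | Y ω = b} = ENNReal.ofReal (1 - p) := by
  have hcompl : {ω | Y ω = b} = {ω | Y ω = a}ᶜ := by
    ext ω
    rcases hYab ω with h | h <;> simp [h, hab, hab.symm]
  rw [hcompl, prob_compl_eq_one_sub (s := {ω | Y ω = a}) (hY (measurableSet_singleton a)), hYa,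
    ENNReal.ofReal_sub _ hp0, ENNReal.ofReal_one]

theorem measure_ne_eq_of_indepFun [IsProbabilityMeasure μ] [MeasurableSpace α]
    [MeasurableSingletonClass α] {Y Z : Ω → α} {a b : α} (hab : a ≠ b)
    (hY : Measurable Y) (hZ : Measurable Z) (hYab : ∀ ω, Y ω = a ∨ Y ω = b)
    (hZab : ∀ ω, Z ω = a ∨ Z ω = b) (hind : IndepFun Y Z μ) {p : ℝ} (hp0 : 0 ≤ p) (hp1 : p ≤ 1)
    (hYa : μ {ω | Y ω = a} = ENNReal.ofReal p) (hZa : μ {ω | Z ω = a} = ENNReal.ofReal p) :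
    μ {ω | Y ω ≠ Z ω} = ENNReal.ofReal (2 * p * (1 - p)) := by
  have hsplit : {ω | Y ω ≠ Z ω} =
      (Y ⁻¹' {a} ∩ Z ⁻¹' {b}) ∪ (Y ⁻¹' {b} ∩ Z ⁻¹' {a}) := by
    ext ω
    rcases hYab ω with hy | hy <;> rcases hZab ω with hz | hz <;> simp [hy, hz, hab, hab.symm]
  have hdisj : Disjoint (Y ⁻¹' {a} ∩ Z ⁻¹' {b}) (Y ⁻¹' {b} ∩ Z ⁻¹' {a}) :=
    Set.disjoint_left.2 fun ω h h' => hab (h.1.symm.trans h'.1)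
  have hYb := measure_eq_ofReal_one_sub_of_two_valued hab hY hYab hp0 hYa
  have hZb := measure_eq_ofReal_one_sub_of_two_valued hab hZ hZab hp0 hZa
  have hq0 : 0 ≤ 1 - p := sub_nonneg.2 hp1
  rw [hsplit, measure_union hdisj
      ((hY (measurableSet_singleton b)).inter (hZ (measurableSet_singleton a))),
    hind.measure_inter_preimage_eq_mul _ _ (measurableSet_singleton a) (measurableSet_singleton b),
    hind.measure_inter_preimage_eq_mul _ _ (measurableSet_singleton b) (measurableSet_singleton a)]
  change μ {ω | Y ω = a} * μ {ω | Z ω = b} + μ {ω | Y ω = b} * μ {ω | Z ω = a} = _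
  rw [hYa, hZa, hYb, hZb, ← ENNReal.ofReal_mul hp0, ← ENNReal.ofReal_mul hq0,
    ← ENNReal.ofReal_add (mul_nonneg hp0 hq0) (mul_nonneg hq0 hp0)]
  ring_nf

theorem SimpleGraph.measure_exists_adj_ne_le {V : Type*} {G : SimpleGraph V} [Fintype G.edgeSet]
    {x : Ω → V → α} {c : ENNReal} (hedge : ∀ i j, G.Adj i j → μ {ω | x ω i ≠ x ω j} ≤ c) :
    μ {ω | ∃ i j, G.Adj i j ∧ x ω i ≠ x ω j} ≤ #G.edgeFinset * c := by
  let disagreement : Sym2 V → Set Ω :=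
    Sym2.lift ⟨fun i j => {ω | x ω i ≠ x ω j}, fun i j => by simp only [ne_comm]⟩
  have hcover : {ω | ∃ i j, G.Adj i j ∧ x ω i ≠ x ω j} ⊆ ⋃ e ∈ G.edgeFinset, disagreement e := by
    rintro ω ⟨i, j, hij, hne⟩
    exact Set.mem_biUnion (x := s(i, j)) (G.mem_edgeFinset.2 hij) hne
  calc μ {ω | ∃ i j, G.Adj i j ∧ x ω i ≠ x ω j}
      ≤ ∑ e ∈ G.edgeFinset, μ (disagreement e) :=
        (measure_mono hcover).trans (measure_biUnion_finset_le _ _)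
    _ ≤ ∑ _e ∈ G.edgeFinset, c := by
        refine sum_le_sum fun e he => ?_
        induction e using Sym2.ind with
        | h i j => exact hedge i j (G.mem_edgeFinset.1 he)
    _ = #G.edgeFinset * c := by rw [sum_const, nsmul_eq_mul]

theorem ofReal_one_sub_le_measure_of_measure_compl_le [IsProbabilityMeasure μ] {s : Set Ω}
    {c : ℝ} (hc : 0 ≤ c) (hs : μ sᶜ ≤ ENNReal.ofReal c) : ENNReal.ofReal (1 - c) ≤ μ s := by
  rw [ENNReal.ofReal_sub _ hc, ENNReal.ofReal_one, tsub_le_iff_right]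
  calc 1 = μ Set.univ := measure_univ.symm
    _ ≤ μ s + μ sᶜ := measure_univ_le_add_compl s
    _ ≤ μ s + ENNReal.ofReal c := by gcongr

end Probability

theorem stmt8_general {n : ℕ} (G : SimpleGraph (Fin n)) [DecidableRel G.Adj] (hconn : G.Connected)
    {Ω : Type*} [MeasureSpace Ω] [IsProbabilityMeasure (ℙ : Measure Ω)]
    (X : ℕ → Ω → Fin n → ℤ) (ksel jsel : ℕ → Ω → Fin n)
    (p : ℝ) (hp0 : 0 ≤ p) (hp1 : p ≤ 1)
    -- initial opinions are i.i.d. ±1-valued with P(x_i(0) = 1) = p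
    (hmeas : ∀ i, Measurable (fun ω => X 0 ω i))
    (hpm : ∀ ω i, X 0 ω i = 1 ∨ X 0 ω i = -1)
    (hindep : iIndepFun (fun i ω => X 0 ω i) ℙ)
    (hdist : ∀ i, (ℙ {ω | X 0 ω i = 1} : ENNReal) = ENNReal.ofReal p)
    -- majority-imitation dynamics
    (hupd : ∀ t ω i, X (t + 1) ω i =
      if i = ksel t ω ∧
          ((G.neighborFinset (ksel t ω)).filter (fun m => X t ω m = X t ω (jsel t ω))).card >
            ((G.neighborFinset (ksel t ω)).filter (fun m => X t ω m = X t ω (ksel t ω))).card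
        then X t ω (jsel t ω) else X t ω i) :
    (ℙ {ω | ∃ T, ∀ t, T ≤ t → ∀ i j : Fin n, X t ω i = X t ω j} : ENNReal)
      ≥ ENNReal.ofReal (1 - 2 * p * (1 - p) * G.edgeFinset.card) := by
  have himit : ∀ ω t i, ∃ j, X (t + 1) ω i = X t ω j := fun ω t i => by
    rw [hupd]
    split_ifs
    exacts [⟨_, rfl⟩, ⟨_, rfl⟩]
  have hedge : ∀ i j, G.Adj i j →
      ℙ {ω | X 0 ω i ≠ X 0 ω j} ≤ ENNReal.ofReal (2 * p * (1 - p)) := fun i j hij =>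
    (measure_ne_eq_of_indepFun (by norm_num) (hmeas i) (hmeas j) (hpm · i) (hpm · j)
      (hindep.indepFun hij.ne) hp0 hp1 (hdist i) (hdist j)).le
  have hq : 0 ≤ 2 * p * (1 - p) := mul_nonneg (by positivity) (sub_nonneg.2 hp1)
  refine ofReal_one_sub_le_measure_of_measure_compl_le (by positivity) ?_
  calc ℙ {ω | ∃ T, ∀ t, T ≤ t → ∀ i j : Fin n, X t ω i = X t ω j}ᶜ
      ≤ ℙ {ω | ∃ i j, G.Adj i j ∧ X 0 ω i ≠ X 0 ω j} := by
        refine measure_mono (Set.compl_subset_comm.1 fun ω hω => ?_)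
        have h0 : ∀ i j, G.Adj i j → X 0 ω i = X 0 ω j := fun i j hij =>
          by_contra fun hne => hω ⟨i, j, hij, hne⟩
        exact ⟨0, fun t _ => eq_of_imitation (fun t => X t ω) (himit ω)
          (hconn.preconnected.eq_of_forall_adj_eq h0) t⟩
    _ ≤ #G.edgeFinset * ENNReal.ofReal (2 * p * (1 - p)) := G.measure_exists_adj_ne_le hedge
    _ = ENNReal.ofReal (2 * p * (1 - p) * #G.edgeFinset) := by
        rw [ENNReal.ofReal_mul hq, ENNReal.ofReal_natCast, mul_comm]

theorem stmt8 {n : ℕ} (G : SimpleGraph (Fin n)) [DecidableRel G.Adj] (hconn : G.Connected)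
    {Ω : Type*} [MeasureSpace Ω] [IsProbabilityMeasure (ℙ : Measure Ω)]
    (X : ℕ → Ω → Fin n → ℤ) (ksel jsel : ℕ → Ω → Fin n)
    (p : ℝ) (hp0 : 0 ≤ p) (hp1 : p ≤ 1)
    -- initial opinions are i.i.d. ±1-valued with P(x_i(0) = 1) = p
    (hmeas : ∀ i, Measurable (fun ω => X 0 ω i))
    (hpm : ∀ ω i, X 0 ω i = 1 ∨ X 0 ω i = -1)
    (hindep : iIndepFun (fun i ω => X 0 ω i) ℙ)
    (hdist : ∀ i, (ℙ {ω | X 0 ω i = 1} : ENNReal) = ENNReal.ofReal p)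
    -- majority-imitation dynamics
    (hadj : ∀ t ω, G.Adj (ksel t ω) (jsel t ω))
    (hupd : ∀ t ω i, X (t + 1) ω i =
      if i = ksel t ω ∧
          ((G.neighborFinset (ksel t ω)).filter (fun m => X t ω m = X t ω (jsel t ω))).card >
            ((G.neighborFinset (ksel t ω)).filter (fun m => X t ω m = X t ω (ksel t ω))).card
        then X t ω (jsel t ω) else X t ω i)
    -- every (vertex, neighbor) pair is selected infinitely often almost surely
    (hio : ∀ᵐ ω ∂ℙ, ∀ v w : Fin n, G.Adj v w → ∀ N : ℕ, ∃ t, N ≤ t ∧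
      ksel t ω = v ∧ jsel t ω = w) :
    (ℙ {ω | ∃ T, ∀ t, T ≤ t → ∀ i j : Fin n, X t ω i = X t ω j} : ENNReal)
      ≥ ENNReal.ofReal (1 - 2 * p * (1 - p) * G.edgeFinset.card) :=
  stmt8_general G hconn X ksel jsel p hp0 hp1 hmeas hpm hindep hdist hupd
end

section
/- Under the majority-imitation dynamics on a finite connected graph, the opinions converge in finite time almost surely: there exists an a.s. finite random time T such that x_i(t) = x_i(T) for all i ∈ [n] and all t ≥ T. -/
/-!
Count the ordered pairs of adjacent vertices holding different opinions. When `v` switches from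
its opinion to that of `w`, the pairs at `v` that disagree before and after are the neighbours
not sharing `v`'s old, resp. new, opinion, so the count drops by twice the gap between the two
majority counts; otherwise the configuration is unchanged. A natural number cannot decrease
forever, so the configuration is eventually constant along every trajectory.
-/

open Finset MeasureTheory ProbabilityTheory

theorem exists_forall_ge_eq_of_eq_or_potential_lt {β : Type*} (f : β → ℕ) (x : ℕ → β)
    (hx : ∀ t, x (t + 1) = x t ∨ f (x (t + 1)) < f (x t)) :
    ∃ T, ∀ t, T ≤ t → x t = x T := by
  have hanti : Antitone (f ∘ x) := antitone_nat_of_succ_le fun t => by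
    rcases hx t with h | h
    · simp [h]
    · exact h.le
  obtain ⟨T, hT⟩ := WellFoundedLT.antitone_chain_condition hanti
  refine ⟨T, fun t ht => ?_⟩
  induction t, ht using Nat.le_induction with
  | base => rfl
  | succ t ht ih =>
    rcases hx t with h | h
    · rw [h, ih]
    · have := (hT t ht).symm.trans (hT (t + 1) (by omega))
      simp only [Function.comp_apply] at this
      omega

namespace SimpleGraph

variable {V α : Type*} [Fintype V] (G : SimpleGraph V) [DecidableRel G.Adj] [DecidableEq α]

def disagreementCount (x : V → α) : ℕ :=
  ∑ u, ∑ w, if G.Adj u w ∧ x u ≠ x w then 1 else 0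

theorem sum_ite_adj_ne_add_card_filter_eq_degree (x : V → α) (v : V) (c : α) :
    (∑ w, if G.Adj v w ∧ c ≠ x w then 1 else 0) + #{w ∈ G.neighborFinset v | x w = c} =
      G.degree v := by
  rw [← card_neighborFinset_eq_degree,
    ← card_filter_add_card_filter_not (s := G.neighborFinset v) (fun w => x w = c),
    add_comm, sum_boole, Nat.cast_id, neighborFinset_eq_filter, filter_filter, filter_filter]
  simp only [ne_comm]

variable [DecidableEq V]

def imitate (x : V → α) (v w : V) : V → α :=
  if #{m ∈ G.neighborFinset v | x m = x v} < #{m ∈ G.neighborFinset v | x m = x w} then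
    Function.update x v (x w)
  else x

theorem imitate_apply (x : V → α) (v w i : V) :
    G.imitate x v w i =
      if i = v ∧ #{m ∈ G.neighborFinset v | x m = x v} < #{m ∈ G.neighborFinset v | x m = x w}
      then x w else x i := by
  unfold imitate
  split_ifs <;> simp_all

/-- Every edge at `v` is counted twice, once in each orientation. -/
theorem disagreementCount_eq_add (x : V → α) (v : V) :
    G.disagreementCount x = 2 * ∑ w, (if G.Adj v w ∧ x v ≠ x w then 1 else 0) +
      ∑ u ∈ univ.erase v, ∑ w ∈ univ.erase v, if G.Adj u w ∧ x u ≠ x w then 1 else 0 := by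
  have hcol : ∑ u ∈ univ.erase v, (if G.Adj u v ∧ x u ≠ x v then 1 else 0) =
      ∑ w, if G.Adj v w ∧ x v ≠ x w then 1 else 0 := by
    rw [sum_erase _ (by simp)]
    exact sum_congr rfl fun w _ => by simp only [G.adj_comm, ne_comm]
  rw [disagreementCount, ← add_sum_erase _ _ (mem_univ v),
    sum_congr rfl fun u _ => (add_sum_erase univ _ (mem_univ v)).symm, sum_add_distrib, hcol]
  ring

theorem disagreementCount_update_add (x : V → α) (v : V) (c : α) :
    G.disagreementCount (Function.update x v c) + 2 * #{w ∈ G.neighborFinset v | x w = c} =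
      G.disagreementCount x + 2 * #{w ∈ G.neighborFinset v | x w = x v} := by
  have hlocal : (∑ w, if G.Adj v w ∧ Function.update x v c v ≠ Function.update x v c w
      then 1 else 0) = ∑ w, if G.Adj v w ∧ c ≠ x w then 1 else 0 :=
    sum_congr rfl fun w _ => by
      by_cases hvw : G.Adj v w
      · rw [Function.update_self, Function.update_of_ne hvw.ne']
      · simp [hvw]
  have hrest : (∑ u ∈ univ.erase v, ∑ w ∈ univ.erase v,
      if G.Adj u w ∧ Function.update x v c u ≠ Function.update x v c w then 1 else 0) =
      ∑ u ∈ univ.erase v, ∑ w ∈ univ.erase v, if G.Adj u w ∧ x u ≠ x w then 1 else 0 :=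
    sum_congr rfl fun u hu => sum_congr rfl fun w hw => by
      rw [Function.update_of_ne (ne_of_mem_erase hu), Function.update_of_ne (ne_of_mem_erase hw)]
  have hold := G.sum_ite_adj_ne_add_card_filter_eq_degree x v (x v)
  have hnew := G.sum_ite_adj_ne_add_card_filter_eq_degree x v c
  rw [disagreementCount_eq_add _ _ v, disagreementCount_eq_add _ x v, hlocal, hrest]
  omega

theorem imitate_eq_or_disagreementCount_lt (x : V → α) (v w : V) :
    G.imitate x v w = x ∨ G.disagreementCount (G.imitate x v w) < G.disagreementCount x := by
  unfold imitate
  split_ifs with h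
  · have := G.disagreementCount_update_add x v (x w)
    exact Or.inr (by omega)
  · exact Or.inl rfl

end SimpleGraph

theorem stmt9_general {n : ℕ} (G : SimpleGraph (Fin n)) [DecidableRel G.Adj]
    {Ω : Type*} [MeasureSpace Ω]
    (X : ℕ → Ω → Fin n → ℤ) (sel : ℕ → Ω → Fin n × Fin n)
    -- majority-imitation update rule
    (hupd : ∀ t ω i, X (t + 1) ω i =
      if i = (sel t ω).1 ∧
          ((G.neighborFinset (sel t ω).1).filter
              (fun m => X t ω m = X t ω (sel t ω).2)).card >
            ((G.neighborFinset (sel t ω).1).filter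
              (fun m => X t ω m = X t ω (sel t ω).1)).card
        then X t ω (sel t ω).2 else X t ω i) :
    ∀ᵐ ω ∂ℙ, ∃ T, ∀ t, T ≤ t → ∀ i : Fin n, X t ω i = X T ω i := by
  refine ae_of_all _ fun ω => ?_
  have hstep (t : ℕ) : X (t + 1) ω = G.imitate (X t ω) (sel t ω).1 (sel t ω).2 := by
    funext i
    rw [hupd, G.imitate_apply]
  obtain ⟨T, hT⟩ := exists_forall_ge_eq_of_eq_or_potential_lt G.disagreementCount
    (fun t => X t ω) fun t => hstep t ▸ G.imitate_eq_or_disagreementCount_lt _ _ _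
  exact ⟨T, fun t ht i => by rw [hT t ht]⟩

theorem stmt9 {n : ℕ} (G : SimpleGraph (Fin n)) [DecidableRel G.Adj] (hconn : G.Connected)
    {Ω : Type*} [MeasureSpace Ω] [IsProbabilityMeasure (ℙ : Measure Ω)]
    (X : ℕ → Ω → Fin n → ℤ) (sel : ℕ → Ω → Fin n × Fin n)
    (hpm : ∀ ω i, X 0 ω i = 1 ∨ X 0 ω i = -1)
    -- at each step, a uniformly random vertex and a uniformly random neighbor of it
    -- are selected, independently over time
    (hselmeas : ∀ t, Measurable (sel t))
    (hselindep : iIndepFun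
      sel ℙ)
    (hadj : ∀ t ω, G.Adj (sel t ω).1 (sel t ω).2)
    (hunif : ∀ t (v w : Fin n), G.Adj v w →
      (ℙ {ω | sel t ω = (v, w)} : ENNReal)
        = ENNReal.ofReal (1 / (n * G.degree v)))
    -- majority-imitation update rule
    (hupd : ∀ t ω i, X (t + 1) ω i =
      if i = (sel t ω).1 ∧
          ((G.neighborFinset (sel t ω).1).filter
              (fun m => X t ω m = X t ω (sel t ω).2)).card >
            ((G.neighborFinset (sel t ω).1).filter
              (fun m => X t ω m = X t ω (sel t ω).1)).card
        then X t ω (sel t ω).2 else X t ω i) :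
    ∀ᵐ ω ∂ℙ, ∃ T, ∀ t, T ≤ t → ∀ i : Fin n, X t ω i = X T ω i :=
  stmt9_general G X sel hupd
end

section
/- On the complete graph K_n, majority-imitation dynamics with uniformly random selection reaches consensus almost surely. -/
/-!
On the complete graph, vertex `k` copies a neighbour `j` holding another opinion exactly when
the opinion of `j` is at least as common as that of `k`. Hence, if `a` is a most common opinion,
letting every vertex outside `a` in turn copy a holder of `a` keeps `a` most common and reaches
consensus: from every configuration some finite word of selections leads to consensus. Since
consensus is absorbing and there are finitely many `±1`-configurations, these words can be
concatenated into one word `w` that leads every `±1`-configuration to consensus. Each letter of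
`w` is selected with a fixed positive probability at every step, so by the second Borel–Cantelli
lemma the independent selections almost surely spell out `w` at some time, after which the
configuration stays at consensus.
-/

open Finset MeasureTheory ProbabilityTheory

section Words

variable {S A : Type*} (f : S → A → S)

theorem List.foldl_mem_of_forall_mem {good : Set S} (hgood : ∀ s ∈ good, ∀ a, f s a ∈ good)
    (w : List A) {s : S} (hs : s ∈ good) : w.foldl f s ∈ good := by
  induction w generalizing s with
  | nil => exact hs
  | cons a w ih => exact ih (hgood s hs a)

theorem exists_word_forall_foldl_mem (P : A → Prop) {good : Set S}
    (hgood : ∀ s ∈ good, ∀ a, f s a ∈ good)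
    (hreach : ∀ s, ∃ w : List A, (∀ a ∈ w, P a) ∧ w.foldl f s ∈ good) (T : Finset S) :
    ∃ w : List A, (∀ a ∈ w, P a) ∧ ∀ s ∈ T, w.foldl f s ∈ good := by
  classical
  induction T using Finset.induction_on with
  | empty => exact ⟨[], by simp, by simp⟩
  | insert s T _ ih =>
    obtain ⟨w, hwP, hw⟩ := ih
    obtain ⟨w', hw'P, hw'⟩ := hreach (w.foldl f s)
    refine ⟨w ++ w', fun a ha => (List.mem_append.1 ha).elim (hwP a) (hw'P a), ?_⟩
    simp only [mem_insert, forall_eq_or_imp, List.foldl_append]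
    exact ⟨hw', fun s' hs' => (w'.foldl_mem_of_forall_mem f hgood (hw s' hs'))⟩

theorem foldl_ofFn_eq_of_forall_succ {x : ℕ → S} {s : ℕ → A}
    (hx : ∀ t, x (t + 1) = f (x t) (s t)) (t L : ℕ) :
    (List.ofFn fun r : Fin L => s (t + r)).foldl f (x t) = x (t + L) := by
  induction L with
  | zero => simp
  | succ L ih =>
    simp only [List.ofFn_succ', List.concat_eq_append, List.foldl_concat, Fin.val_castSucc,
      Fin.val_last, ih, ← add_assoc, hx]

theorem mem_of_le_of_forall_succ {x : ℕ → S} {s : ℕ → A} (hx : ∀ t, x (t + 1) = f (x t) (s t))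
    {good : Set S} (hgood : ∀ y ∈ good, ∀ a, f y a ∈ good) {t t' : ℕ} (ht : x t ∈ good)
    (htt' : t ≤ t') : x t' ∈ good := by
  induction t', htt' using Nat.le_induction with
  | base => exact ht
  | succ t' _ ih => rw [hx]; exact hgood _ ih _

end Words

namespace ProbabilityTheory

variable {Ω A : Type*} [MeasurableSpace Ω] {μ : Measure Ω} [MeasurableSpace A] {X : ℕ → Ω → A}

theorem iIndepFun.measure_biInter_iInter_preimage_block (hind : iIndepFun X μ) {L : ℕ} [NeZero L]
    {B : Fin L → Set A} (hB : ∀ r, MeasurableSet (B r)) (s : Finset ℕ) :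
    μ (⋂ m ∈ s, ⋂ r : Fin L, X (m * L + r) ⁻¹' B r) =
      ∏ m ∈ s, ∏ r : Fin L, μ (X (m * L + r) ⁻¹' B r) := by
  have hpairs := (hind.precomp (Nat.divModEquiv L).symm.injective).meas_biInter
    (S := s ×ˢ univ) (s := fun p : ℕ × Fin L => X (p.1 * L + p.2) ⁻¹' B p.2)
    fun p _ => ⟨B p.2, hB p.2, rfl⟩
  rw [← prod_product' (f := fun m (r : Fin L) => μ (X (m * L + r) ⁻¹' B r)), ← hpairs]
  congr 1
  ext ω
  simpa using ⟨fun h m r hm => h m hm r, fun h m hm r => h m r hm⟩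

theorem iIndepFun.ae_exists_ofFn_eq [MeasurableSingletonClass A] (hind : iIndepFun X μ)
    (hX : ∀ t, Measurable (X t)) (w : List A)
    (hw : ∀ a ∈ w, ∃ c ≠ 0, ∀ t, c ≤ μ {ω | X t ω = a}) :
    ∀ᵐ ω ∂μ, ∃ t, List.ofFn (fun r : Fin w.length => X (t + r) ω) = w := by
  set L := w.length
  rcases Nat.eq_zero_or_pos L with hL | hL
  · obtain rfl : w = [] := List.length_eq_zero_iff.1 hL
    exact ae_of_all _ fun ω => ⟨0, rfl⟩
  have : NeZero L := ⟨hL.ne'⟩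
  have := hind.isProbabilityMeasure
  set E : ℕ → Set Ω := fun m => ⋂ r : Fin L, X (m * L + r) ⁻¹' {w.get r}
  have hEmeas : ∀ m, MeasurableSet (E m) :=
    fun m => .iInter fun r => hX _ (measurableSet_singleton _)
  have hprod := hind.measure_biInter_iInter_preimage_block (L := L) (B := fun r => {w.get r})
    fun r => measurableSet_singleton _
  have hE : ∀ m, μ (E m) = ∏ r : Fin L, μ (X (m * L + r) ⁻¹' {w.get r}) := fun m => by
    simpa [E] using hprod {m}
  have hindep : iIndepSet E μ :=
    (iIndepSet_iff_meas_biInter hEmeas).2 fun s => by simp only [hE]; exact hprod s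
  choose c hc0 hc using hw
  have hC : ∏ r : Fin L, c (w.get r) (List.get_mem w r) ≠ 0 :=
    prod_ne_zero_iff.2 fun r _ => hc0 _ _
  have hsum : ∑' m, μ (E m) = ⊤ := by
    refine top_le_iff.1 ((ENNReal.tsum_const_eq_top_of_ne_zero hC).symm.le.trans
      (ENNReal.tsum_le_tsum fun m => ?_))
    rw [hE]
    exact prod_le_prod' fun r _ => hc _ _ _
  filter_upwards [(mem_ae_iff_prob_eq_one (MeasurableSet.measurableSet_limsup hEmeas)).2
    (measure_limsup_eq_one hEmeas hindep hsum)] with ω hω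
  obtain ⟨m, hm⟩ := (Filter.mem_limsup_iff_frequently_mem.1 hω).exists
  refine ⟨m * L, ?_⟩
  conv_rhs => rw [← List.ofFn_get w]
  exact congrArg _ (funext fun r => by simpa using Set.mem_iInter.1 hm r)

end ProbabilityTheory

section Update

variable {V β : Type*} [Fintype V] [DecidableEq V] [DecidableEq β]

theorem card_update_ne_lt {x : V → β} {k : V} {a : β} (hk : x k ≠ a) :
    #{i | Function.update x k a i ≠ a} < #{i | x i ≠ a} := by
  refine card_lt_card ⟨fun i => ?_, fun h => ?_⟩
  · by_cases hi : i = k <;> simp [hi]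
  · simpa using h (by simpa using hk : k ∈ _)

theorem card_update_eq_le_of_forall_card_eq_le {x : V → β} {a : β}
    (hx : ∀ b, #{i | x i = b} ≤ #{i | x i = a}) (k : V) (b : β) :
    #{i | Function.update x k a i = b} ≤ #{i | Function.update x k a i = a} := by
  by_cases hb : b = a
  · rw [hb]
  calc #{i | Function.update x k a i = b} ≤ #{i | x i = b} := by
        refine card_le_card fun i => ?_
        by_cases hi : i = k <;> simp [hi, Ne.symm hb]
    _ ≤ #{i | x i = a} := hx b
    _ ≤ #{i | Function.update x k a i = a} := by
        refine card_le_card fun i => ?_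
        by_cases hi : i = k <;> simp [hi]

end Update

namespace MajorityImitation

variable {V β : Type*}

def IsConsensus (x : V → β) : Prop := ∀ i j, x i = x j

variable [Fintype V] [DecidableEq V] [DecidableEq β]

section Step

variable (G : SimpleGraph V) [DecidableRel G.Adj]

def imitationStep (x : V → β) (p : V × V) : V → β := fun i =>
  if i = p.1 ∧ #{m ∈ G.neighborFinset p.1 | x m = x p.2} >
      #{m ∈ G.neighborFinset p.1 | x m = x p.1}
  then x p.2 else x i

variable {G}

theorem imitationStep_of_ne {x : V → β} {p : V × V} {i : V} (hi : i ≠ p.1) :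
    imitationStep G x p i = x i := by
  simp [imitationStep, hi]

theorem imitationStep_eq_or_eq (x : V → β) (p : V × V) (i : V) :
    imitationStep G x p i = x p.2 ∨ imitationStep G x p i = x i := by
  unfold imitationStep
  split_ifs <;> simp

theorem imitationStep_mem_piFinset {O : Finset β} {x : V → β}
    (hx : x ∈ Fintype.piFinset fun _ => O) (p : V × V) :
    imitationStep G x p ∈ Fintype.piFinset fun _ => O := by
  rw [Fintype.mem_piFinset] at hx ⊢
  exact fun i => (imitationStep_eq_or_eq x p i).elim (· ▸ hx _) (· ▸ hx i)

theorem IsConsensus.imitationStep {x : V → β} (hx : IsConsensus x) (p : V × V) :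
    IsConsensus (imitationStep G x p) := by
  intro i j
  rcases imitationStep_eq_or_eq (G := G) x p i with hi | hi <;>
    rcases imitationStep_eq_or_eq (G := G) x p j with hj | hj <;>
    rw [hi, hj] <;> exact hx _ _

end Step

theorem imitationStep_top_eq_update {x : V → β} {k j : V} (hne : x k ≠ x j)
    (hle : #{i | x i = x k} ≤ #{i | x i = x j}) :
    imitationStep ⊤ x (k, j) = Function.update x k (x j) := by
  funext i
  by_cases hi : i = k
  swap
  · rw [imitationStep_of_ne hi, Function.update_of_ne hi]
  subst hi
  have hk : i ∈ ({m | x m = x i} : Finset V) := by simp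
  have hj : i ∉ ({m | x m = x j} : Finset V) := by simpa using hne
  -- `i` is not its own neighbour, hence the `- 1`
  have hmaj : #{m | x m = x i} - 1 < #{m | x m = x j} := by
    have := card_pos.2 ⟨i, hk⟩
    omega
  have hnbr : (⊤ : SimpleGraph V).neighborFinset i = univ.erase i := by ext; simp [eq_comm]
  simp only [imitationStep, hnbr, filter_erase, card_erase_of_mem hk, erase_eq_of_notMem hj]
  simp [hmaj]

theorem exists_word_isConsensus_of_forall_card_eq_le (a : β) (x : V → β)
    (hx : ∀ b, #{i | x i = b} ≤ #{i | x i = a}) :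
    ∃ w : List (V × V), (∀ p ∈ w, (⊤ : SimpleGraph V).Adj p.1 p.2) ∧
      IsConsensus (w.foldl (imitationStep ⊤) x) := by
  induction hN : #{i | x i ≠ a} using Nat.strong_induction_on generalizing x with
  | _ N ih =>
  by_cases hcons : ∀ k, x k = a
  · exact ⟨[], by simp, fun i j => by simp [hcons]⟩
  push Not at hcons
  obtain ⟨k, hk⟩ := hcons
  obtain ⟨j, hj⟩ : ∃ j, x j = a := by
    have : 0 < #{i | x i = a} := (hx (x k)).trans_lt' (card_pos.2 ⟨k, by simp⟩)
    simpa [Finset.Nonempty] using card_pos.1 this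
  have hstep : imitationStep ⊤ x (k, j) = Function.update x k a :=
    hj ▸ imitationStep_top_eq_update (hj ▸ hk) (hj ▸ hx (x k))
  obtain ⟨w, hw, hcons⟩ := ih _ (hN ▸ card_update_ne_lt hk) _
    (card_update_eq_le_of_forall_card_eq_le hx k) rfl
  refine ⟨(k, j) :: w, List.forall_mem_cons.2 ⟨?_, hw⟩, by rwa [List.foldl_cons, hstep]⟩
  rintro (rfl : k = j)
  exact hk hj

theorem exists_word_isConsensus (x : V → β) :
    ∃ w : List (V × V), (∀ p ∈ w, (⊤ : SimpleGraph V).Adj p.1 p.2) ∧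
      IsConsensus (w.foldl (imitationStep ⊤) x) := by
  rcases isEmpty_or_nonempty V with hV | hV
  · exact ⟨[], by simp, fun i => isEmptyElim i⟩
  obtain ⟨a, -, ha⟩ := (univ.image x).exists_max_image (fun b => #{i | x i = b})
    (univ_nonempty.image x)
  refine exists_word_isConsensus_of_forall_card_eq_le a x fun b => ?_
  by_cases hb : b ∈ univ.image x
  · exact ha b hb
  · have : #{i | x i = b} = 0 := by
      simpa [card_eq_zero, filter_eq_empty_iff] using fun i h => hb (by simp [← h])
    omega

end MajorityImitation

open MajorityImitation in
theorem stmt13_general {n : ℕ} (G : SimpleGraph (Fin n)) [DecidableRel G.Adj]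
    (hG : G = (⊤ : SimpleGraph (Fin n)))
    {Ω : Type*} [MeasureSpace Ω]
    (X : ℕ → Ω → Fin n → ℤ) (sel : ℕ → Ω → Fin n × Fin n)
    (hpm : ∀ ω i, X 0 ω i = 1 ∨ X 0 ω i = -1)
    -- at each step, a uniformly random vertex and a uniformly random neighbor of it
    -- are selected, independently over time
    (hselmeas : ∀ t, Measurable (sel t))
    (hselindep : iIndepFun sel ℙ)
    (hunif : ∀ t (v w : Fin n), G.Adj v w →
      (ℙ {ω | sel t ω = (v, w)} : ENNReal)
        = ENNReal.ofReal (1 / (n * G.degree v)))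
    -- majority-imitation update rule
    (hupd : ∀ t ω i, X (t + 1) ω i =
      if i = (sel t ω).1 ∧
          ((G.neighborFinset (sel t ω).1).filter
              (fun m => X t ω m = X t ω (sel t ω).2)).card >
            ((G.neighborFinset (sel t ω).1).filter
              (fun m => X t ω m = X t ω (sel t ω).1)).card
        then X t ω (sel t ω).2 else X t ω i) :
    ∀ᵐ ω ∂ℙ, ∃ T, ∀ t, T ≤ t → ∀ i j : Fin n, X t ω i = X t ω j := by
  subst hG
  obtain rfl : ‹DecidableRel (⊤ : SimpleGraph (Fin n)).Adj› = SimpleGraph.Top.adjDecidable _ :=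
    Subsingleton.elim _ _
  have hstep : ∀ ω t, X (t + 1) ω = imitationStep ⊤ (X t ω) (sel t ω) :=
    fun ω t => funext (hupd t ω)
  set T := Fintype.piFinset fun _ : Fin n => ({1, -1} : Finset ℤ)
  have hT : ∀ t ω, X t ω ∈ T := fun t ω =>
    mem_of_le_of_forall_succ _ (x := (X · ω)) (s := (sel · ω)) (hstep ω) (good := ↑T)
      (fun x hx p => imitationStep_mem_piFinset hx p) (by simpa [T] using hpm ω) t.zero_le
  have hcons : ∀ x ∈ {x : Fin n → ℤ | IsConsensus x}, ∀ p,
      imitationStep ⊤ x p ∈ {x | IsConsensus x} :=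
    fun x hx p => IsConsensus.imitationStep hx p
  obtain ⟨w, hwadj, hw⟩ :=
    exists_word_forall_foldl_mem (imitationStep ⊤) _ hcons exists_word_isConsensus T
  have hpos : ∀ a ∈ w, ∃ c ≠ 0, ∀ t, c ≤ ℙ {ω | sel t ω = a} := by
    intro a ha
    have hdeg : 0 < (⊤ : SimpleGraph (Fin n)).degree a.1 :=
      ((⊤ : SimpleGraph _).degree_pos_iff_exists_adj a.1).2 ⟨_, hwadj a ha⟩
    refine ⟨_, (ENNReal.ofReal_pos.2 ?_).ne', fun t => (hunif t a.1 a.2 (hwadj a ha)).ge⟩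
    exact one_div_pos.2 (mul_pos (Nat.cast_pos.2 a.1.pos) (Nat.cast_pos.2 hdeg))
  filter_upwards [hselindep.ae_exists_ofFn_eq hselmeas w hpos] with ω ⟨t, ht⟩
  refine ⟨t + w.length, fun t' ht' =>
    mem_of_le_of_forall_succ _ (x := (X · ω)) (s := (sel · ω)) (hstep ω) hcons ?_ ht'⟩
  rw [← foldl_ofFn_eq_of_forall_succ _ (x := (X · ω)) (s := (sel · ω)) (hstep ω), ht]
  exact hw _ (hT t ω)

theorem stmt13 {n : ℕ} (G : SimpleGraph (Fin n)) [DecidableRel G.Adj]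
    (hG : G = (⊤ : SimpleGraph (Fin n)))
    {Ω : Type*} [MeasureSpace Ω] [IsProbabilityMeasure (ℙ : Measure Ω)]
    (X : ℕ → Ω → Fin n → ℤ) (sel : ℕ → Ω → Fin n × Fin n)
    (hpm : ∀ ω i, X 0 ω i = 1 ∨ X 0 ω i = -1)
    -- at each step, a uniformly random vertex and a uniformly random neighbor of it
    -- are selected, independently over time
    (hselmeas : ∀ t, Measurable (sel t))
    (hselindep : iIndepFun sel ℙ)
    (hadj : ∀ t ω, G.Adj (sel t ω).1 (sel t ω).2)
    (hunif : ∀ t (v w : Fin n), G.Adj v w →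
      (ℙ {ω | sel t ω = (v, w)} : ENNReal)
        = ENNReal.ofReal (1 / (n * G.degree v)))
    -- majority-imitation update rule
    (hupd : ∀ t ω i, X (t + 1) ω i =
      if i = (sel t ω).1 ∧
          ((G.neighborFinset (sel t ω).1).filter
              (fun m => X t ω m = X t ω (sel t ω).2)).card >
            ((G.neighborFinset (sel t ω).1).filter
              (fun m => X t ω m = X t ω (sel t ω).1)).card
        then X t ω (sel t ω).2 else X t ω i) :
    ∀ᵐ ω ∂ℙ, ∃ T, ∀ t, T ≤ t → ∀ i j : Fin n, X t ω i = X t ω j :=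
  stmt13_general G hG X sel hpm hselmeas hselindep hunif hupd
end

section
/- In the majority-imitation model, a single update step changes Z by an even nonpositive integer when the update rule is followed: if vertex k imitates neighbor j (so strictly more of k's neighbors hold x_j(t) than x_k(t)), then Z_t − Z_{t+1} ≥ 2; if k does not change, Z_t = Z_{t+1}. -/
/-!
Only the pairs containing `k` change their summand when `x k` alone changes, and the summand is
symmetric, so the change of `Z` is twice the change along the row of `k`. On that row a
non-neighbour contributes `1` before and after, while a neighbour `m` contributes `1{x m ≠ x k}`
before and `1{x m ≠ b}` after. Hence `Z` drops by exactly
`2 (#{m ∈ N k | x m = b} - #{m ∈ N k | x m = x k})`, which is at least `2` when the rule fires.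
-/

open Finset

theorem Finset.sum_sum_eq_of_eq_zero_off_cross {ι M : Type*} [Fintype ι] [DecidableEq ι]
    [AddCommGroup M] (h : ι → ι → M) (k : ι) (hh : ∀ i m, i ≠ k → m ≠ k → h i m = 0) :
    ∑ i, ∑ m, h i m = ∑ m, h k m + ∑ i, h i k - h k k := by
  have hcol : ∀ i ∈ univ.erase k, ∑ m, h i m = h i k := fun i hi =>
    sum_eq_single k (fun m _ hm => hh i m (ne_of_mem_erase hi) hm) (by simp)
  rw [← add_sum_erase _ _ (mem_univ k), sum_congr rfl hcol, sum_erase_eq_sub (mem_univ k),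
    add_sub_assoc]

namespace SimpleGraph

variable {V α : Type*} [DecidableEq V] [DecidableEq α] (G : SimpleGraph V) [DecidableRel G.Adj]

-- `Zval` for arbitrary vertex and opinion types: `Zval G x = G.zValue x` holds by `rfl`.
def zTerm (x : V → α) (i m : V) : ℕ :=
  max (if x i ≠ x m then 1 else 0) (if i ≠ m ∧ ¬ G.Adj i m then 1 else 0)

def zValue [Fintype V] (x : V → α) : ℕ := ∑ i, ∑ m, G.zTerm x i m

variable {G}

theorem zTerm_comm (x : V → α) (i m : V) : G.zTerm x i m = G.zTerm x m i := by
  simp only [zTerm, ne_comm, G.adj_comm]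

theorem zTerm_self (x : V → α) (i : V) : G.zTerm x i i = 0 := by
  simp [zTerm]

theorem zTerm_update_of_ne (x : V → α) {k : V} (b : α) {i m : V} (hi : i ≠ k) (hm : m ≠ k) :
    G.zTerm (Function.update x k b) i m = G.zTerm x i m := by
  simp [zTerm, Function.update_of_ne hi, Function.update_of_ne hm]

theorem zTerm_sub_zTerm_update (x : V → α) (k : V) (b : α) (m : V) :
    (G.zTerm x k m : ℤ) - G.zTerm (Function.update x k b) k m =
      if G.Adj k m then (if x m = b then 1 else 0) - (if x m = x k then 1 else 0) else 0 := by
  obtain rfl | hm := eq_or_ne m k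
  · simp [zTerm]
  by_cases hadj : G.Adj k m <;> by_cases hb : b = x m <;> by_cases hk : x k = x m <;>
    simp [zTerm, hm, hm.symm, hadj, hb, hk, eq_comm (a := x m)]

theorem zValue_sub_zValue_update [Fintype V] (x : V → α) (k : V) (b : α) :
    (G.zValue x : ℤ) - G.zValue (Function.update x k b) =
      2 * ((#{m ∈ G.neighborFinset k | x m = b} : ℤ) - #{m ∈ G.neighborFinset k | x m = x k}) := by
  set h : V → V → ℤ := fun i m => G.zTerm x i m - G.zTerm (Function.update x k b) i m
  have hoff : ∀ i m, i ≠ k → m ≠ k → h i m = 0 := fun i m hi hm => by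
    simp [h, zTerm_update_of_ne x b hi hm]
  calc (G.zValue x : ℤ) - G.zValue (Function.update x k b)
      = ∑ i, ∑ m, h i m := by simp [h, zValue, sum_sub_distrib]
    _ = ∑ m, h k m + ∑ i, h i k - h k k := sum_sum_eq_of_eq_zero_off_cross h k hoff
    _ = 2 * ∑ m, h k m := by simp only [h, zTerm_comm _ _ k, zTerm_self, sub_self, sub_zero]; ring
    _ = _ := by
      simp only [h, zTerm_sub_zTerm_update, ← sum_filter, ← neighborFinset_eq_filter,
        sum_sub_distrib, sum_const, nsmul_eq_mul, mul_one]

end SimpleGraph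

theorem stmt15_general {n : ℕ} (G : SimpleGraph (Fin n)) [DecidableRel G.Adj]
    (x x' : Fin n → ℤ)
    (k j : Fin n)
    (hupd : ∀ i, x' i =
      if i = k ∧
          ((G.neighborFinset k).filter (fun m => x m = x j)).card >
            ((G.neighborFinset k).filter (fun m => x m = x k)).card
        then x j else x i) :
    Zval G x' ≤ Zval G x ∧ (2 : ℤ) ∣ ((Zval G x : ℤ) - Zval G x') ∧
    (((G.neighborFinset k).filter (fun m => x m = x j)).card >
        ((G.neighborFinset k).filter (fun m => x m = x k)).card →
      Zval G x' + 2 ≤ Zval G x) ∧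
    (¬ (((G.neighborFinset k).filter (fun m => x m = x j)).card >
        ((G.neighborFinset k).filter (fun m => x m = x k)).card) →
      Zval G x' = Zval G x) := by
  have hZ : ∀ y, Zval G y = G.zValue y := fun _ => rfl
  by_cases hmaj : ((G.neighborFinset k).filter (fun m => x m = x j)).card >
      ((G.neighborFinset k).filter (fun m => x m = x k)).card
  · have hx' : x' = Function.update x k (x j) := by
      funext i
      simp [hupd i, Function.update_apply, hmaj]
    have hdrop := SimpleGraph.zValue_sub_zValue_update (G := G) x k (x j)
    rw [← hx', ← hZ, ← hZ] at hdrop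
    omega
  · have hx' : x' = x := funext fun i => by simp [hupd i, hmaj]
    simp [hx', hmaj]

theorem stmt15 {n : ℕ} (G : SimpleGraph (Fin n)) [DecidableRel G.Adj]
    (x x' : Fin n → ℤ) (hx : ∀ i, x i = 1 ∨ x i = -1)
    (k j : Fin n) (hadj : G.Adj k j)
    (hupd : ∀ i, x' i =
      if i = k ∧
          ((G.neighborFinset k).filter (fun m => x m = x j)).card >
            ((G.neighborFinset k).filter (fun m => x m = x k)).card
        then x j else x i) :
    Zval G x' ≤ Zval G x ∧ (2 : ℤ) ∣ ((Zval G x : ℤ) - Zval G x') ∧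
    (((G.neighborFinset k).filter (fun m => x m = x j)).card >
        ((G.neighborFinset k).filter (fun m => x m = x k)).card →
      Zval G x' + 2 ≤ Zval G x) ∧
    (¬ (((G.neighborFinset k).filter (fun m => x m = x j)).card >
        ((G.neighborFinset k).filter (fun m => x m = x k)).card) →
      Zval G x' = Zval G x) :=
  stmt15_general G x x' k j hupd
end
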